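/- Let $M$ be a finitely generated $\mathbb{Z}^n$-graded module over $R = k[x_1,\ldots,x_n]$ with a Stanley decomposition $\mathcal{S} = \{(m_1,G_1),\ldots,(m_p,G_p)\}$ such that each $(\deg m_i)^+$ is square-free, $G_i = \{x_l : l \in \mathrm{supp}((\deg m_i)^+)\}$, and $|\deg m_1| \ge \cdots \ge |\deg m_p|$. Set $M^{(j)} = \sum_{i=1}^j R m_i$ (and $M^{(0)} = 0$). Then for each $j = 1,\ldots,p$, the colon ideal $M^{(j-1)} :_R m_j$ equals the ideal generated by the variables not in $G_j$: $M^{(j-1)} :_R m_j = (x_l : x_l \notin G_j)$. -/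

import Mathlib

/-!
Common definitions: `ℤⁿ`-graded modules over `R = k[x_1, …, x_n]`, Stanley
decompositions, the Čech complex on `x_1, …, x_n` (computing local cohomology
`H^i_𝔪` and, via the standard characterization, Castelnuovo–Mumford regularity),
and `Ext^i_R(R/I, ω_R)` for a monomial ideal `I`, computed with its natural
`ℤⁿ`-grading from the Taylor complex, which is a graded free resolution of `R/I`
on a chosen set of monomial generators of `I`.
-/

open MvPolynomial

namespace Paper

variable {k : Type} [Field k] {n : ℕ}

/-- The unit vector `e j` in `ℤⁿ`. -/
def eZ (n : ℕ) (j : Fin n) : Fin n → ℤ := fun i => if i = j then 1 else 0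

section Stanley

variable (k n)
variable (M : Type) [AddCommGroup M] [Module (MvPolynomial (Fin n) k) M]
  [Module k M] [IsScalarTower k (MvPolynomial (Fin n) k) M]

/-- The `k`-subspace `k[G]m` of `M` spanned by all `u • m`, `u` a monomial in the
variables of `G`. -/
def stanleySpan (m : M) (G : Set (Fin n)) : Submodule k M :=
  Submodule.span k
    {x | ∃ u : Fin n →₀ ℕ, ↑u.support ⊆ G ∧ x = (monomial u (1 : k) : MvPolynomial (Fin n) k) • m}

/-- `k[G]m` is a Stanley space: no monomial in the variables of `G` kills `m`. -/
def IsStanleySpace (m : M) (G : Set (Fin n)) : Prop :=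
  ∀ u : Fin n →₀ ℕ, ↑u.support ⊆ G → (monomial u (1 : k) : MvPolynomial (Fin n) k) • m ≠ 0

/-- A Stanley decomposition of `M`: finitely many pairs `(m i, G i)` such that each
`k[G i](m i)` is a Stanley space and `M = ⊕ᵢ k[G i](m i)` as `k`-vector spaces. -/
def IsStanleyDecomposition {p : ℕ} (m : Fin p → M) (G : Fin p → Set (Fin n)) : Prop :=
  (∀ i, IsStanleySpace k n M (m i) (G i)) ∧
    DirectSum.IsInternal (fun i : Fin p => stanleySpan k n M (m i) (G i))

end Stanley

section PartialSpan

variable (k n)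

/-- `M⁽ʲ⁾ = R m_1 + ⋯ + R m_j`, the `R`-submodule generated by the first `j`
elements of the family `m`. -/
noncomputable def partialSpan (M : Type) [AddCommGroup M] [Module (MvPolynomial (Fin n) k) M]
    {p : ℕ} (m : Fin p → M) (j : ℕ) : Submodule (MvPolynomial (Fin n) k) M :=
  Submodule.span (MvPolynomial (Fin n) k) (m '' {i : Fin p | (i : ℕ) < j})

end PartialSpan

section Cech

variable (k n)

/-- The multiplicative set generated by the variables `x i`, `i ∈ Λ`. -/
noncomputable def varSubmonoid (Λ : Finset (Fin n)) : Submonoid (MvPolynomial (Fin n) k) :=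
  Submonoid.closure ((fun i => (X i : MvPolynomial (Fin n) k)) '' ↑Λ)

lemma varSubmonoid_mono {Λ Λ' : Finset (Fin n)} (h : Λ ⊆ Λ') :
    varSubmonoid k n Λ ≤ varSubmonoid k n Λ' :=
  Submonoid.closure_mono (Set.image_mono (by exact_mod_cast h))

variable (M : Type) [AddCommGroup M] [Module (MvPolynomial (Fin n) k) M]

/-- The localization `M_{x_Λ}` of `M` inverting the variables in `Λ`. -/
abbrev LocM (Λ : Finset (Fin n)) : Type := LocalizedModule (varSubmonoid k n Λ) M

/-- The canonical map `M_{x_Λ} → M_{x_Λ'}` for `Λ ⊆ Λ'`. -/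
noncomputable def locMap {Λ Λ' : Finset (Fin n)} (h : Λ ⊆ Λ') :
    LocM k n M Λ →ₗ[MvPolynomial (Fin n) k] LocM k n M Λ' :=
  LocalizedModule.lift _ (LocalizedModule.mkLinearMap (varSubmonoid k n Λ') M)
    (fun s => IsLocalizedModule.map_units (LocalizedModule.mkLinearMap (varSubmonoid k n Λ') M)
      ⟨(s : MvPolynomial (Fin n) k), varSubmonoid_mono k n h s.2⟩)

/-- The `j`-th term `Čʲ(M) = ⊕_{|Λ| = j} M_{x_Λ}` of the Čech complex of `M` on the
variables `x 1, …, x n`. -/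
abbrev CechTerm (j : ℕ) : Type :=
  ∀ Λ : {S : Finset (Fin n) // S.card = j}, LocM k n M Λ.1

/-- The Čech differential, an alternating sum of localization maps. -/
noncomputable def cechD (j : ℕ) :
    CechTerm k n M j →ₗ[MvPolynomial (Fin n) k] CechTerm k n M (j + 1) :=
  LinearMap.pi fun Λ' : {S : Finset (Fin n) // S.card = j + 1} =>
    ∑ l ∈ Λ'.1.attach,
      ((-1 : ℤ) ^ ((Λ'.1.filter (fun x => x < l.1)).card)) •
        ((locMap k n M (Finset.erase_subset l.1 Λ'.1)).comp
          (LinearMap.proj (⟨Λ'.1.erase l.1, by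
            rw [Finset.card_erase_of_mem l.2, Λ'.2]; rfl⟩ :
              {S : Finset (Fin n) // S.card = j})))

/-- The coboundaries in cohomological degree `i` of the Čech complex of `M`. -/
noncomputable def cechB : (i : ℕ) → Submodule (MvPolynomial (Fin n) k) (CechTerm k n M i)
  | 0 => ⊥
  | (s + 1) => LinearMap.range (cechD k n M s)

/-- The `j`-th term of the restricted Čech subcomplex `Č_F`: only the direct summands
`M_{x_Λ}` with `F ⊆ Λ` occur (in particular it vanishes for `j < |F|`). -/
def cechSub (F : Finset (Fin n)) (j : ℕ) :
    Submodule (MvPolynomial (Fin n) k) (CechTerm k n M j) where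
  carrier := {c | ∀ Λ, ¬ F ⊆ Λ.1 → c Λ = 0}
  add_mem' := fun h1 h2 Λ h => by
    have := h1 Λ h; have := h2 Λ h
    simp_all
  zero_mem' := fun Λ h => rfl
  smul_mem' := fun r c hc Λ h => by
    have := hc Λ h
    simp_all

/-- The coboundaries of the restricted subcomplex `Č_F` in cohomological degree `i`. -/
noncomputable def cechBF (F : Finset (Fin n)) :
    (i : ℕ) → Submodule (MvPolynomial (Fin n) k) (CechTerm k n M i)
  | 0 => ⊥
  | (s + 1) => Submodule.map (cechD k n M s) (cechSub k n M F s)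

end Cech

section CechGraded

variable (k n)
variable (M : Type) [AddCommGroup M] [Module (MvPolynomial (Fin n) k) M]
variable (gr : (Fin n → ℤ) → Set M)

/-- The multidegree `a` component (for the `ℤⁿ`-grading of `M` given by `gr`) of the
localization `M_{x_Λ}`: generated by fractions `m / xˢ` where `m` is homogeneous of
multidegree `b`, `xˢ` is a monomial in the variables of `Λ` and `b - s = a`. -/
noncomputable def locPiece (Λ : Finset (Fin n)) (a : Fin n → ℤ) :
    AddSubgroup (LocM k n M Λ) :=
  AddSubgroup.closure
    {y | ∃ (m : M) (b : Fin n → ℤ) (s : Fin n →₀ ℕ)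
        (hs : (monomial s (1 : k) : MvPolynomial (Fin n) k) ∈ varSubmonoid k n Λ),
          m ∈ gr b ∧ (∀ i, b i - (s i : ℤ) = a i) ∧
            y = LocalizedModule.mk m ⟨monomial s (1 : k), hs⟩}

/-- The multidegree `a` component of the `j`-th term of the Čech complex of `M`. -/
noncomputable def cechPiece (j : ℕ) (a : Fin n → ℤ) : Set (CechTerm k n M j) :=
  {c | ∀ Λ, c Λ ∈ locPiece k n M gr Λ.1 a}

/-- The total degree `t` component of the `j`-th term of the Čech complex of `M`. -/
noncomputable def cechPieceTot (j : ℕ) (t : ℤ) : AddSubgroup (CechTerm k n M j) :=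
  ⨆ (a : Fin n → ℤ) (_ : (∑ i, a i) = t), AddSubgroup.closure (cechPiece k n M gr j a)

/-- `regLE k n M gr c` says that the Castelnuovo–Mumford regularity of the graded
module `M` (with respect to the total degree `ℤ`-grading) is at most `c`; by the
standard local cohomology characterization of regularity,
`reg M = max {i + t : Hⁱ_𝔪(M)_t ≠ 0}`, where `Hⁱ_𝔪(M)` is the cohomology of the
Čech complex of `M` on `x 1, …, x n`. -/
noncomputable def regLE (c : ℤ) : Prop :=
  ∀ (i : ℕ) (t : ℤ) (z : CechTerm k n M i),
    z ∈ LinearMap.ker (cechD k n M i) → z ∈ cechPieceTot k n M gr i t →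
      z ∉ cechB k n M i → (i : ℤ) + t ≤ c

end CechGraded

section Pieces

variable (k n)

/-- The set of homogeneous polynomials of multidegree `a ∈ ℤⁿ`
(empty if some `a i < 0`). -/
def RPieceSet (a : Fin n → ℤ) : Set (MvPolynomial (Fin n) k) :=
  {g | ∃ (c : k) (s : Fin n →₀ ℕ), (∀ i, (s i : ℤ) = a i) ∧ g = monomial s c}

/-- The multidegree `a` component of the polynomial ring, as a `k`-subspace. -/
noncomputable def RPiece (a : Fin n → ℤ) : Submodule k (MvPolynomial (Fin n) k) :=
  Submodule.span k (RPieceSet k n a)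

/-- A monomial ideal: an ideal generated by monomials. -/
def IsMonomialIdeal (I : Ideal (MvPolynomial (Fin n) k)) : Prop :=
  ∃ T : Set (Fin n →₀ ℕ), I = Ideal.span ((fun s => (monomial s (1 : k))) '' T)

/-- The multidegree `a` component of `R/I`: the image of the multidegree `a`
component of `R`. -/
def quotientGrSet (I : Ideal (MvPolynomial (Fin n) k)) (a : Fin n → ℤ) :
    Set (MvPolynomial (Fin n) k ⧸ I) :=
  (fun g => Submodule.Quotient.mk g) '' RPieceSet k n a

end Pieces

section Taylor

variable (k n)
variable {r : ℕ} (u : Fin r → (Fin n →₀ ℕ))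

/-- The exponent of the least common multiple of the monomials `x^(u l)`, `l ∈ S`. -/
noncomputable def lcmExp (S : Finset (Fin r)) : Fin n →₀ ℕ :=
  Finsupp.equivFunOnFinite.symm (fun i => S.sup (fun l => u l i))

/-- The `s`-th term of `Hom_R(T_•, ω_R)`, where `T_•` is the Taylor complex (a
`ℤⁿ`-graded free resolution of `R/I`) on the monomial generators `x^(u l)` of `I`:
as a module it is a direct sum of copies of `R` indexed by `s`-subsets of generators. -/
abbrev TaylorDual (s : ℕ) : Type :=
  ∀ _S : {S : Finset (Fin r) // S.card = s}, MvPolynomial (Fin n) k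

/-- The differential of `Hom_R(T_•, ω_R)`: the transpose of the Taylor complex
differential. -/
noncomputable def taylorD (s : ℕ) :
    TaylorDual k n (r := r) s →ₗ[MvPolynomial (Fin n) k] TaylorDual k n (r := r) (s + 1) :=
  LinearMap.pi fun S' : {S : Finset (Fin r) // S.card = s + 1} =>
    ∑ l ∈ S'.1.attach,
      (monomial (lcmExp n u S'.1 - lcmExp n u (S'.1.erase l.1))
          ((-1 : k) ^ ((S'.1.filter (fun x => x < l.1)).card))) •
        (LinearMap.proj (⟨S'.1.erase l.1, by
            rw [Finset.card_erase_of_mem l.2, S'.2]; rfl⟩ :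
              {S : Finset (Fin r) // S.card = s}))

/-- Cocycles of `Hom_R(T_•, ω_R)` in cohomological degree `i`. -/
noncomputable def extZ (i : ℕ) :
    Submodule (MvPolynomial (Fin n) k) (TaylorDual k n (r := r) i) :=
  LinearMap.ker (taylorD k n u i)

/-- Coboundaries of `Hom_R(T_•, ω_R)` in cohomological degree `i`. -/
noncomputable def extB :
    (i : ℕ) → Submodule (MvPolynomial (Fin n) k) (TaylorDual k n (r := r) i)
  | 0 => ⊥
  | (s + 1) => LinearMap.range (taylorD k n u s)

/-- `Ext^i_R(R/I, ω_R)`: the `i`-th cohomology of `Hom_R(T_•, ω_R)`, where `T_•` is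
the Taylor resolution of `R/I` on the monomial generators `x^(u l)` of `I` and
`ω_R = R(-(1,…,1))` is the canonical module. -/
noncomputable def ExtMod (i : ℕ) : Type :=
  extZ k n u i ⧸ (Submodule.comap (extZ k n u i).subtype (extB k n u i ⊓ extZ k n u i))

noncomputable instance (i : ℕ) : AddCommGroup (ExtMod k n u i) :=
  inferInstanceAs (AddCommGroup (extZ k n u i ⧸ _))

noncomputable instance (i : ℕ) : Module (MvPolynomial (Fin n) k) (ExtMod k n u i) :=
  inferInstanceAs (Module (MvPolynomial (Fin n) k) (extZ k n u i ⧸ _))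

noncomputable instance (i : ℕ) : Module k (ExtMod k n u i) :=
  inferInstanceAs (Module k (extZ k n u i ⧸ _))

noncomputable instance (i : ℕ) :
    IsScalarTower k (MvPolynomial (Fin n) k) (ExtMod k n u i) :=
  inferInstanceAs (IsScalarTower k (MvPolynomial (Fin n) k) (extZ k n u i ⧸ _))

/-- The multidegree `a` component of `Hom_R(T_s, ω_R) = ⊕_S Hom_R(R(-lcm_S), R(-(1,…,1)))`:
the component indexed by an `s`-subset `S` must be homogeneous of multidegree
`a + lcm_S - (1,…,1)` in `R`. -/
noncomputable def taylorPiece (s : ℕ) (a : Fin n → ℤ) :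
    Submodule k (TaylorDual k n (r := r) s) :=
  Submodule.pi Set.univ
    (fun S : {S : Finset (Fin r) // S.card = s} =>
      RPiece k n (fun i => a i + (lcmExp n u S.1 i : ℤ) - 1))

/-- The multidegree `a` component of `Ext^i_R(R/I, ω_R)`, i.e. of the `i`-th
cohomology of `Hom_R(T_•, ω_R)`: the image of the multidegree `a` cocycles. -/
noncomputable def extPiece (i : ℕ) (a : Fin n → ℤ) : Submodule k (ExtMod k n u i) :=
  Submodule.map
    ((Submodule.mkQ (Submodule.comap (extZ k n u i).subtype
        (extB k n u i ⊓ extZ k n u i))).restrictScalars k)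
    (Submodule.comap ((extZ k n u i).subtype.restrictScalars k) (taylorPiece k n u i a))

end Taylor

end Paper

/-!
For `l ∉ G_j` the element `x_l m_j` is homogeneous of degree `d_j + e_l`. Expanding it in the
Stanley decomposition, only the monomial multiples `u m_i` of that same degree survive, and
these have `i < j`: for `i ≥ j` the ordering rules out `u = 1`, while any `x_{l'} ∣ u` has
`l' ∈ G_i`, so the `l'`-th coordinate of `d_i + deg u` is at least `2`, whereas that of `d_j + e_l`
is at most `1`. Hence `(x_l : l ∉ G_j) ⊆ M^{(j-1)} : m_j`, and inductively
`M^{(j-1)} ⊆ ⊕_{i<j} k[G_i] m_i`. Conversely, if `f m_j ∈ M^{(j-1)}`, the part `g` of `f`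
supported on monomials in `G_j` has `g m_j ∈ k[G_j] m_j ∩ ⊕_{i<j} k[G_i] m_i = 0`; the monomial
multiples of `m_j` in `k[G_j] m_j` are nonzero and lie in distinct degrees, hence are linearly
independent, so `g = 0` and `f ∈ (x_l : l ∉ G_j)`.
-/

theorem Submodule.mem_span_image_filter_of_mem_of_iSupIndep {R M ι α : Type*} [Ring R]
    [AddCommGroup M] [Module R M] {gr : ι → Submodule R M} (hgr : iSupIndep gr)
    {v : α → M} {deg : α → ι} (hv : ∀ a, v a ∈ gr (deg a)) {s : Set α} {i : ι} {x : M}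
    (hx : x ∈ Submodule.span R (v '' s)) (hxi : x ∈ gr i) :
    x ∈ Submodule.span R (v '' {a ∈ s | deg a = i}) := by
  have hsplit : Submodule.span R (v '' s) ≤
      Submodule.span R (v '' {a ∈ s | deg a = i}) ⊔ ⨆ (b) (_ : b ≠ i), gr b := by
    refine Submodule.span_le.2 ?_
    rintro _ ⟨a, ha, rfl⟩
    by_cases hai : deg a = i
    · exact Submodule.mem_sup_left (Submodule.subset_span ⟨a, ⟨ha, hai⟩, rfl⟩)
    · exact Submodule.mem_sup_right (Submodule.mem_iSup_of_mem _
        (Submodule.mem_iSup_of_mem hai (hv a)))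
  obtain ⟨y, hy, z, hz, rfl⟩ := Submodule.mem_sup.1 (hsplit hx)
  have hyi : y ∈ gr i := Submodule.span_le.2 (by rintro _ ⟨a, ⟨-, rfl⟩, rfl⟩; exact hv a) hy
  have hzi : z ∈ gr i := by simpa using Submodule.sub_mem _ hxi hyi
  rw [Submodule.disjoint_def.1 (iSupIndep_def.1 hgr i) z hzi hz, add_zero]
  exact hy

theorem Submodule.mem_of_mem_span_of_forall_smul_mem {R S M : Type*} [Semiring R] [Semiring S]
    [AddCommMonoid M] [Module R M] [Module S M] {s : Set M} {K : Submodule S M}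
    (h : ∀ x ∈ s, ∀ r : R, r • x ∈ K) {x : M} (hx : x ∈ Submodule.span R s) : x ∈ K := by
  suffices ∀ r : R, r • x ∈ K by simpa using this 1
  induction hx using Submodule.span_induction with
  | mem x hx => exact h x hx
  | zero => simp
  | add x y _ _ hx hy => intro r; rw [smul_add]; exact K.add_mem (hx r) (hy r)
  | smul a x _ hx => intro r; rw [smul_smul]; exact hx (r * a)

theorem MvPolynomial.monomial_mem_span_X_compl {σ R : Type*} [CommSemiring R] {G : Set σ}
    {w : σ →₀ ℕ} (hw : ¬ ↑w.support ⊆ G) (c : R) :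
    monomial w c ∈ Ideal.span (X '' Gᶜ) := by
  obtain ⟨l, hlw, hlG⟩ := Set.not_subset.1 hw
  refine mem_ideal_span_X_image.2 fun w' hw' => ?_
  rw [Finset.mem_singleton.1 (support_monomial_subset hw')]
  exact ⟨l, hlG, Finsupp.mem_support_iff.1 hlw⟩

theorem MvPolynomial.smul_eq_sum_coeff_smul_monomial {σ R M : Type*} [CommSemiring R]
    [AddCommMonoid M] [Module (MvPolynomial σ R) M] [Module R M]
    [IsScalarTower R (MvPolynomial σ R) M] (f : MvPolynomial σ R) (x : M) :
    f • x = ∑ w ∈ f.support, coeff w f • (monomial w (1 : R) • x) := by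
  conv_lhs => rw [f.as_sum]
  rw [Finset.sum_smul]
  refine Finset.sum_congr rfl fun w _ => ?_
  rw [← smul_assoc, smul_monomial, smul_eq_mul, mul_one]

namespace Paper

open MvPolynomial

variable {k : Type} [Field k] {n : ℕ} {M : Type} [AddCommGroup M]
  [Module (MvPolynomial (Fin n) k) M] [Module k M] {p : ℕ}

def IsGradedSMulX (gr : (Fin n → ℤ) → Submodule k M) : Prop :=
  ∀ (j : Fin n) (a : Fin n → ℤ), ∀ x ∈ gr a, (X j : MvPolynomial (Fin n) k) • x ∈ gr (a + eZ n j)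

theorem IsGradedSMulX.X_pow_smul_mem {gr : (Fin n → ℤ) → Submodule k M} (hX : IsGradedSMulX gr)
    (l : Fin n) (b : ℕ) {a : Fin n → ℤ} {x : M} (hx : x ∈ gr a) :
    (X l ^ b : MvPolynomial (Fin n) k) • x ∈ gr (a + b • eZ n l) := by
  induction b with
  | zero => simpa using hx
  | succ b ih =>
    rw [pow_succ', mul_smul, succ_nsmul, ← add_assoc]
    exact hX l _ _ ih

theorem IsGradedSMulX.monomial_smul_mem {gr : (Fin n → ℤ) → Submodule k M}
    (hX : IsGradedSMulX gr) (u : Fin n →₀ ℕ) {a : Fin n → ℤ} {x : M} (hx : x ∈ gr a) :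
    (monomial u (1 : k) : MvPolynomial (Fin n) k) • x ∈ gr (a + fun i => (u i : ℤ)) := by
  induction u using Finsupp.induction generalizing a x with
  | zero => simpa [← Pi.zero_def] using hx
  | single_add l b v _ _ ih =>
    have hdeg : (a + fun i => (v i : ℤ)) + b • eZ n l =
        a + fun i => ((Finsupp.single l b + v) i : ℤ) := by
      ext i
      simp only [Pi.add_apply, Pi.smul_apply, eZ, Finsupp.add_apply, Finsupp.single_apply,
        smul_ite, eq_comm (a := l)]
      split_ifs <;> push_cast <;> ring
    rw [monomial_single_add, mul_smul, ← hdeg]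
    exact hX.X_pow_smul_mem l b (ih hx)

theorem IsGradedSMulX.linearIndepOn_monomial_smul {gr : (Fin n → ℤ) → Submodule k M}
    (hX : IsGradedSMulX gr) (hgr : iSupIndep gr) {d : Fin n → ℤ} {m : M} (hm : m ∈ gr d)
    {G : Set (Fin n)} (hG : IsStanleySpace k n M m G) :
    LinearIndepOn k (fun w => (monomial w (1 : k) : MvPolynomial (Fin n) k) • m)
      {w | ↑w.support ⊆ G} := by
  have hinj : Function.Injective fun w : {w : Fin n →₀ ℕ // ↑w.support ⊆ G} =>
      d + fun i => (w.1 i : ℤ) := by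
    intro w w' h
    ext i
    simpa using congrFun h i
  exact (hgr.comp hinj).linearIndependent _ (fun w => hX.monomial_smul_mem w.1 hm)
    fun w => hG w.1 w.2

theorem iSup_stanleySpan_eq_span (m : Fin p → M) (G : Fin p → Set (Fin n)) :
    ⨆ i, stanleySpan k n M (m i) (G i) = Submodule.span k
      ((fun iu : Fin p × (Fin n →₀ ℕ) => (monomial iu.2 (1 : k) : MvPolynomial (Fin n) k) • m iu.1)
        '' {iu | ↑iu.2.support ⊆ G iu.1}) := by
  simp only [stanleySpan, ← Submodule.span_iUnion]
  congr 1
  ext x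
  simp [eq_comm]

theorem lt_of_add_eq_add_eZ {d : Fin p → Fin n → ℤ} (hsf : ∀ i l, d i l ≤ 1)
    (hord : ∀ i j : Fin p, i ≤ j → ∑ l, d j l ≤ ∑ l, d i l) {i j : Fin p} {l : Fin n}
    (hl : d j l ≤ 0) {u : Fin n →₀ ℕ} (hu : ∀ l' ∈ u.support, 0 < d i l')
    (h : (d i + fun l' => (u l' : ℤ)) = d j + eZ n l) : i < j := by
  by_contra! hji
  have h' : ∀ l', d i l' + u l' = d j l' + eZ n l l' := fun l' => congrFun h l'
  rcases eq_or_ne u 0 with rfl | hu0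
  · have hsum : ∑ l', d i l' = ∑ l', d j l' + 1 := by
      have := Finset.sum_congr rfl fun l' (_ : l' ∈ Finset.univ) => h' l'
      simpa [Finset.sum_add_distrib, eZ] using this
    linarith [hord j i hji]
  · obtain ⟨l', hl'⟩ := Finsupp.ne_iff.1 hu0
    have hdi : d i l' = 1 := le_antisymm (hsf i l') (hu l' (Finsupp.mem_support_iff.2 hl'))
    have hul' : 1 ≤ (u l' : ℤ) := by exact_mod_cast Nat.one_le_iff_ne_zero.2 hl'
    have hl'' := h' l'
    by_cases hll : l' = l
    · subst hll
      simp only [eZ, ↓reduceIte] at hl''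
      linarith
    · simp only [eZ, hll, ↓reduceIte, add_zero] at hl''
      linarith [hsf j l']

variable [IsScalarTower k (MvPolynomial (Fin n) k) M]

structure IsOrderedSquarefreeStanleyDecomposition (gr : (Fin n → ℤ) → Submodule k M)
    (m : Fin p → M) (G : Fin p → Set (Fin n)) (d : Fin p → Fin n → ℤ) : Prop where
  isStanleyDecomposition : IsStanleyDecomposition k n M m G
  mem_gr : ∀ i, m i ∈ gr (d i)
  le_one : ∀ i l, d i l ≤ 1
  eq_setOf_pos : ∀ i, G i = {l | 0 < d i l}
  sum_antitone : ∀ i j : Fin p, i ≤ j → ∑ l, d j l ≤ ∑ l, d i l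

namespace IsOrderedSquarefreeStanleyDecomposition

variable {gr : (Fin n → ℤ) → Submodule k M} {m : Fin p → M} {G : Fin p → Set (Fin n)}
  {d : Fin p → Fin n → ℤ}

theorem X_smul_mem_partialSpan (hS : IsOrderedSquarefreeStanleyDecomposition gr m G d)
    (hgr : iSupIndep gr) (hX : IsGradedSMulX gr) {j : Fin p} {l : Fin n} (hl : l ∉ G j) :
    (X l : MvPolynomial (Fin n) k) • m j ∈ partialSpan k n M m j := by
  have hspan : (X l : MvPolynomial (Fin n) k) • m j ∈ ⨆ i, stanleySpan k n M (m i) (G i) := by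
    rw [hS.isStanleyDecomposition.2.submodule_iSup_eq_top]
    trivial
  rw [iSup_stanleySpan_eq_span] at hspan
  have hdeg := Submodule.mem_span_image_filter_of_mem_of_iSupIndep hgr
    (deg := fun iu => d iu.1 + fun l' => (iu.2 l' : ℤ))
    (fun iu => hX.monomial_smul_mem iu.2 (hS.mem_gr iu.1)) hspan (hX l _ _ (hS.mem_gr j))
  refine (Submodule.span_le (p := (partialSpan k n M m j).restrictScalars k)).2 ?_ hdeg
  rintro _ ⟨⟨i, u⟩, ⟨hu, hiu⟩, rfl⟩
  have hij : i < j := by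
    refine lt_of_add_eq_add_eZ hS.le_one hS.sum_antitone ?_ (fun l' hl' => ?_) hiu
    · simpa [hS.eq_setOf_pos] using hl
    · simpa [hS.eq_setOf_pos] using hu hl'
  exact Submodule.smul_mem _ _ (Submodule.subset_span (Set.mem_image_of_mem m hij))

theorem span_X_compl_le_colon (hS : IsOrderedSquarefreeStanleyDecomposition gr m G d)
    (hgr : iSupIndep gr) (hX : IsGradedSMulX gr) (j : Fin p) :
    Ideal.span (X '' (G j)ᶜ) ≤
      (partialSpan k n M m j).colon (Submodule.span (MvPolynomial (Fin n) k) {m j}) := by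
  refine Ideal.span_le.2 ?_
  rintro _ ⟨l, hl, rfl⟩
  exact Submodule.mem_colon_span_singleton.2 (hS.X_smul_mem_partialSpan hgr hX hl)

theorem monomial_smul_mem_partialSpan (hS : IsOrderedSquarefreeStanleyDecomposition gr m G d)
    (hgr : iSupIndep gr) (hX : IsGradedSMulX gr) {j : Fin p} {w : Fin n →₀ ℕ}
    (hw : ¬ ↑w.support ⊆ G j) (c : k) :
    (monomial w c : MvPolynomial (Fin n) k) • m j ∈ partialSpan k n M m j :=
  Submodule.mem_colon_span_singleton.1
    (hS.span_X_compl_le_colon hgr hX j (monomial_mem_span_X_compl hw c))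

theorem partialSpan_le_iSup_stanleySpan (hS : IsOrderedSquarefreeStanleyDecomposition gr m G d)
    (hgr : iSupIndep gr) (hX : IsGradedSMulX gr) (N : ℕ) :
    (partialSpan k n M m N).restrictScalars k ≤
      ⨆ (i : Fin p) (_ : (i : ℕ) < N), stanleySpan k n M (m i) (G i) := by
  induction N using Nat.strong_induction_on with
  | _ N ih =>
    intro x hx
    refine Submodule.mem_of_mem_span_of_forall_smul_mem ?_ hx
    rintro _ ⟨i, hi, rfl⟩ f
    rw [smul_eq_sum_coeff_smul_monomial]
    refine Submodule.sum_mem _ fun w _ => Submodule.smul_mem _ _ ?_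
    by_cases hw : ↑w.support ⊆ G i
    · exact Submodule.mem_iSup_of_mem i
        (Submodule.mem_iSup_of_mem hi (Submodule.subset_span ⟨w, hw, rfl⟩))
    · exact biSup_mono (f := fun i => stanleySpan k n M (m i) (G i))
        (fun (i' : Fin p) (hi' : (i' : ℕ) < i) => hi'.trans hi)
        (ih i hi (hS.monomial_smul_mem_partialSpan hgr hX hw 1))

theorem eq_zero_of_mem_stanleySpan_of_mem_partialSpan
    (hS : IsOrderedSquarefreeStanleyDecomposition gr m G d) (hgr : iSupIndep gr)
    (hX : IsGradedSMulX gr) {j : Fin p} {x : M} (hxS : x ∈ stanleySpan k n M (m j) (G j))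
    (hxN : x ∈ partialSpan k n M m j) : x = 0 :=
  Submodule.disjoint_def.1
    (hS.isStanleyDecomposition.2.submodule_iSupIndep.disjoint_biSup
      (y := {i | (i : ℕ) < j}) (lt_irrefl (j : ℕ)))
    x hxS (hS.partialSpan_le_iSup_stanleySpan hgr hX j hxN)

theorem mem_span_X_compl_of_smul_mem_partialSpan
    (hS : IsOrderedSquarefreeStanleyDecomposition gr m G d) (hgr : iSupIndep gr)
    (hX : IsGradedSMulX gr) {j : Fin p} {f : MvPolynomial (Fin n) k}
    (hf : f • m j ∈ partialSpan k n M m j) :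
    f ∈ Ideal.span (X '' (G j)ᶜ) := by
  classical
  set A := f.support.filter fun w => ↑w.support ⊆ G j
  have hA : ∑ w ∈ A, coeff w f • (monomial w (1 : k) : MvPolynomial (Fin n) k) • m j ∈
      partialSpan k n M m j := by
    have hrest : ∑ w ∈ f.support.filter (fun w => ¬ ↑w.support ⊆ G j),
        coeff w f • (monomial w (1 : k) : MvPolynomial (Fin n) k) • m j ∈
          partialSpan k n M m j :=
      Submodule.sum_mem _ fun w hw => Submodule.smul_of_tower_mem _ _
        (hS.monomial_smul_mem_partialSpan hgr hX (Finset.mem_filter.1 hw).2 1)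
    have := Submodule.sub_mem _ hf hrest
    rwa [smul_eq_sum_coeff_smul_monomial, ← Finset.sum_filter_add_sum_filter_not _
      (fun w => ↑w.support ⊆ G j), add_sub_cancel_right] at this
  have hA0 := hS.eq_zero_of_mem_stanleySpan_of_mem_partialSpan hgr hX
    (Submodule.sum_mem _ fun w hw => Submodule.smul_mem _ _
      (Submodule.subset_span ⟨w, (Finset.mem_filter.1 hw).2, rfl⟩)) hA
  have hcoeff := linearIndepOn_iff'.1 (hX.linearIndepOn_monomial_smul hgr (hS.mem_gr j)
    (hS.isStanleyDecomposition.1 j)) A _ (fun w hw => (Finset.mem_filter.1 hw).2) hA0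
  refine mem_ideal_span_X_image.2 fun w hw => ?_
  by_contra! hwG
  refine mem_support_iff.1 hw (hcoeff w (Finset.mem_filter.2 ⟨hw, fun l hl => ?_⟩))
  by_contra hlG
  exact Finsupp.mem_support_iff.1 hl (hwG l hlG)

end IsOrderedSquarefreeStanleyDecomposition

end Paper

open MvPolynomial Paper in
theorem stmt_8_general {k : Type} [Field k] {n : ℕ}
    (M : Type) [AddCommGroup M] [Module (MvPolynomial (Fin n) k) M]
    [Module k M] [IsScalarTower k (MvPolynomial (Fin n) k) M]
    -- `gr` is the `ℤⁿ`-grading of `M`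
    (gr : (Fin n → ℤ) → Submodule k M)
    (hgr_internal : DirectSum.IsInternal gr)
    (hgr_compat : ∀ (j : Fin n) (a : Fin n → ℤ), ∀ x ∈ gr a,
      (X j : MvPolynomial (Fin n) k) • x ∈ gr (a + eZ n j))
    -- a Stanley decomposition `{(m i, G i)}` of `M` …
    {p : ℕ} (m : Fin p → M) (G : Fin p → Set (Fin n)) (d : Fin p → (Fin n → ℤ))
    (hSD : IsStanleyDecomposition k n M m G)
    -- … by homogeneous elements `m i` of degree `d i`,
    (hdeg : ∀ i, m i ∈ gr (d i))
    -- with `(d i)⁺` square-free,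
    (hsf : ∀ i l, d i l ≤ 1)
    -- `G i = supp ((d i)⁺)`,
    (hG : ∀ i, G i = {l | 0 < d i l})
    -- and the pairs ordered by weakly decreasing total degree:
    (hord : ∀ i j : Fin p, i ≤ j → (∑ l, d j l) ≤ (∑ l, d i l)) :
    -- Then, with `M⁽ʲ⁾ = R m_1 + ⋯ + R m_j`, the colon ideal `M⁽ʲ⁻¹⁾ : m_j` is
    -- generated by the variables not in `G j`:
    ∀ j : Fin p,
      Submodule.colon (partialSpan k n M m (j : ℕ))
          (Submodule.span (MvPolynomial (Fin n) k) {m j}) =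
        Ideal.span {f : MvPolynomial (Fin n) k | ∃ l, l ∉ G j ∧ f = X l} := by
  intro j
  have hS : IsOrderedSquarefreeStanleyDecomposition gr m G d := ⟨hSD, hdeg, hsf, hG, hord⟩
  have hgr := hgr_internal.submodule_iSupIndep
  have hvars : {f : MvPolynomial (Fin n) k | ∃ l, l ∉ G j ∧ f = X l} = X '' (G j)ᶜ := by
    ext f
    simp [eq_comm]
  rw [hvars]
  exact le_antisymm
    (fun f hf => hS.mem_span_X_compl_of_smul_mem_partialSpan hgr hgr_compat
      (Submodule.mem_colon_span_singleton.1 hf))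
    (hS.span_X_compl_le_colon hgr hgr_compat j)

open MvPolynomial Paper in
theorem stmt_8 {k : Type} [Field k] {n : ℕ}
    (M : Type) [AddCommGroup M] [Module (MvPolynomial (Fin n) k) M]
    [Module k M] [IsScalarTower k (MvPolynomial (Fin n) k) M]
    [Module.Finite (MvPolynomial (Fin n) k) M]
    -- `gr` is the `ℤⁿ`-grading of `M`
    (gr : (Fin n → ℤ) → Submodule k M)
    (hgr_internal : DirectSum.IsInternal gr)
    (hgr_compat : ∀ (j : Fin n) (a : Fin n → ℤ), ∀ x ∈ gr a,
      (X j : MvPolynomial (Fin n) k) • x ∈ gr (a + eZ n j))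
    -- a Stanley decomposition `{(m i, G i)}` of `M` …
    {p : ℕ} (m : Fin p → M) (G : Fin p → Set (Fin n)) (d : Fin p → (Fin n → ℤ))
    (hSD : IsStanleyDecomposition k n M m G)
    -- … by homogeneous elements `m i` of degree `d i`,
    (hdeg : ∀ i, m i ∈ gr (d i))
    -- with `(d i)⁺` square-free,
    (hsf : ∀ i l, d i l ≤ 1)
    -- `G i = supp ((d i)⁺)`,
    (hG : ∀ i, G i = {l | 0 < d i l})
    -- and the pairs ordered by weakly decreasing total degree:
    (hord : ∀ i j : Fin p, i ≤ j → (∑ l, d j l) ≤ (∑ l, d i l)) :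
    -- Then, with `M⁽ʲ⁾ = R m_1 + ⋯ + R m_j`, the colon ideal `M⁽ʲ⁻¹⁾ : m_j` is
    -- generated by the variables not in `G j`:
    ∀ j : Fin p,
      Submodule.colon (partialSpan k n M m (j : ℕ))
          (Submodule.span (MvPolynomial (Fin n) k) {m j}) =
        Ideal.span {f : MvPolynomial (Fin n) k | ∃ l, l ∉ G j ∧ f = X l} :=
  stmt_8_general M gr hgr_internal hgr_compat m G d hSD hdeg hsf hG hord
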